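/- arXiv:1406.4308 — 5 statements merged into one kernel-verified Lean document; each statement's English description precedes it below -/
import Mathlib

section
/- For all real numbers x, y and all α with 1 ≤ α ≤ 2, we have (1/2)(|x+y|^α + |x−y|^α) ≤ |x|^α + |y|^α. -/
open Real Finset

lemma aux_subadd {A B s : ℝ} (hA : 0 ≤ A) (hB : 0 ≤ B) (hs : 0 ≤ s) (hs1 : s ≤ 1) :
    (A + B) ^ s ≤ A ^ s + B ^ s := by
  have h := NNReal.rpow_add_le_add_rpow A.toNNReal B.toNNReal hs hs1
  have := NNReal.coe_le_coe.2 h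
  simpa [NNReal.coe_rpow, Real.toNNReal_add hA hB, Real.coe_toNNReal _ hA,
    Real.coe_toNNReal _ hB, Real.coe_toNNReal _ (add_nonneg hA hB)] using this

lemma aux_concave {A B s : ℝ} (hA : 0 ≤ A) (hB : 0 ≤ B) (hs : 0 < s) (hs1 : s ≤ 1) :
    (A ^ s + B ^ s) / 2 ≤ ((A + B) / 2) ^ s := by
  have hp : (1 : ℝ) ≤ 1 / s := (le_div_iff₀ hs).2 (by linarith)
  have h := Real.arith_mean_le_rpow_mean (Finset.univ : Finset (Fin 2))
    ![1/2, 1/2] ![A ^ s, B ^ s] (by intro i _; fin_cases i <;> norm_num)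
    (by simp [Fin.sum_univ_succ]; norm_num)
    (by intro i _; fin_cases i <;> exact Real.rpow_nonneg (by assumption) s) hp
  simp only [Fin.sum_univ_two, Matrix.cons_val_zero, Matrix.cons_val_one, Matrix.head_cons] at h
  have hAs : (A ^ s) ^ (1 / s) = A := by
    rw [← Real.rpow_mul hA, mul_one_div, div_self hs.ne', Real.rpow_one]
  have hBs : (B ^ s) ^ (1 / s) = B := by
    rw [← Real.rpow_mul hB, mul_one_div, div_self hs.ne', Real.rpow_one]
  have h1s : (1:ℝ) / (1 / s) = s := by field_simp
  rw [hAs, hBs] at h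
  calc (A ^ s + B ^ s) / 2 = 1/2 * A ^ s + 1/2 * B ^ s := by ring
    _ ≤ (1/2 * A + 1/2 * B) ^ (1 / (1/s)) := h
    _ = ((A + B) / 2) ^ s := by rw [h1s]; ring_nf

theorem stmt_0 (x y α : ℝ) (h1 : 1 ≤ α) (h2 : α ≤ 2) :
    (1 / 2) * (|x + y| ^ α + |x - y| ^ α) ≤ |x| ^ α + |y| ^ α := by
  have hs : (0:ℝ) < α / 2 := by linarith
  have hs1 : α / 2 ≤ 1 := by linarith
  have habs : ∀ t : ℝ, |t| ^ α = (t ^ 2) ^ (α / 2) := by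
    intro t
    rw [← sq_abs, ← Real.rpow_natCast |t| 2, ← Real.rpow_mul (abs_nonneg t)]
    norm_num
    congr 1
    ring
  rw [habs (x+y), habs (x-y), habs x, habs y]
  have step1 : ((x+y)^2) ^ (α/2) + ((x-y)^2) ^ (α/2) ≤ 2 * (x^2 + y^2) ^ (α/2) := by
    have h := aux_concave (sq_nonneg (x+y)) (sq_nonneg (x-y)) hs hs1
    have heq : ((x+y)^2 + (x-y)^2) / 2 = x^2 + y^2 := by ring
    rw [heq] at h
    linarith
  have step2 : (x^2 + y^2) ^ (α/2) ≤ (x^2) ^ (α/2) + (y^2) ^ (α/2) :=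
    aux_subadd (sq_nonneg x) (sq_nonneg y) hs.le hs1
  linarith
end

section
/- If ξ and η are independent real-valued random variables, η is symmetrically distributed (η has the same distribution as −η), and 1 ≤ α ≤ 2, then E[|ξ + η|^α] ≤ E[|ξ|^α] + E[|η|^α]. -/
open MeasureTheory ProbabilityTheory

private lemma rpow_add_le_add_rpow_real (a b : ℝ) (ha : 0 ≤ a) (hb : 0 ≤ b) {p : ℝ}
    (hp : 0 ≤ p) (hp1 : p ≤ 1) : (a + b) ^ p ≤ a ^ p + b ^ p := by
  have h := NNReal.rpow_add_le_add_rpow a.toNNReal b.toNNReal hp hp1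
  rw [← Real.toNNReal_add ha hb] at h
  have h2 := NNReal.coe_le_coe.2 h
  push_cast at h2
  rwa [Real.coe_toNNReal _ (by positivity), Real.coe_toNNReal _ ha, Real.coe_toNNReal _ hb] at h2

private lemma key_pointwise (α : ℝ) (h1 : 1 ≤ α) (h2 : α ≤ 2) (x y : ℝ) :
    |x + y| ^ α + |x - y| ^ α ≤ 2 * (|x| ^ α + |y| ^ α) := by
  have hα0 : (0 : ℝ) ≤ α := by linarith
  set r := α / 2 with hr
  have hr0 : (0 : ℝ) ≤ r := by positivity
  have hr1 : r ≤ 1 := by rw [hr]; linarith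
  have habs : ∀ z : ℝ, |z| ^ α = (z ^ 2) ^ r := by
    intro z
    rw [← sq_abs, ← Real.rpow_natCast |z| 2, ← Real.rpow_mul (abs_nonneg z)]
    congr 1
    rw [hr]; ring
  rw [habs (x + y), habs (x - y), habs x, habs y]
  have hconc := (Real.concaveOn_rpow hr0 hr1).2 (Set.mem_Ici.2 (sq_nonneg (x + y)))
    (Set.mem_Ici.2 (sq_nonneg (x - y))) (by norm_num : (0:ℝ) ≤ 1/2)
    (by norm_num : (0:ℝ) ≤ 1/2) (by norm_num : (1:ℝ)/2 + 1/2 = 1)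
  simp only [smul_eq_mul] at hconc
  have hsum : (1:ℝ)/2 * (x + y) ^ 2 + 1/2 * (x - y) ^ 2 = x ^ 2 + y ^ 2 := by ring
  rw [hsum] at hconc
  have hsub : (x ^ 2 + y ^ 2) ^ r ≤ (x ^ 2) ^ r + (y ^ 2) ^ r :=
    rpow_add_le_add_rpow_real _ _ (sq_nonneg x) (sq_nonneg y) hr0 hr1
  nlinarith [hconc, hsub]

private lemma bound_pointwise (α : ℝ) (hα0 : 0 ≤ α) (x y : ℝ) :
    |x + y| ^ α ≤ 2 ^ α * (|x| ^ α + |y| ^ α) := by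
  have h1 : |x + y| ≤ 2 * max |x| |y| := by
    calc |x + y| ≤ |x| + |y| := abs_add_le x y
    _ ≤ 2 * max |x| |y| := by
        rcases le_total |x| |y| with h | h <;> simp [max_eq_right, max_eq_left, h] <;> linarith
  calc |x + y| ^ α ≤ (2 * max |x| |y|) ^ α :=
        Real.rpow_le_rpow (abs_nonneg _) h1 hα0
    _ = 2 ^ α * (max |x| |y|) ^ α := Real.mul_rpow (by norm_num) (le_max_iff.2 (Or.inl (abs_nonneg x)))
    _ ≤ 2 ^ α * (|x| ^ α + |y| ^ α) := by
        gcongr 2 ^ α * ?_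
        rcases le_total |x| |y| with h | h
        · rw [max_eq_right h]
          nlinarith [Real.rpow_nonneg (abs_nonneg x) α]
        · rw [max_eq_left h]
          nlinarith [Real.rpow_nonneg (abs_nonneg y) α]

theorem stmt_1 {Ω : Type*} [MeasurableSpace Ω] (μ : Measure Ω) [IsProbabilityMeasure μ]
    (ξ η : Ω → ℝ) (hξ : Measurable ξ) (hη : Measurable η)
    (hindep : IndepFun ξ η μ)
    (hsymm : μ.map η = μ.map (fun ω => -η ω))
    (α : ℝ) (h1 : 1 ≤ α) (h2 : α ≤ 2)
    (hintξ : Integrable (fun ω => |ξ ω| ^ α) μ)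
    (hintη : Integrable (fun ω => |η ω| ^ α) μ) :
    ∫ ω, |ξ ω + η ω| ^ α ∂μ ≤ (∫ ω, |ξ ω| ^ α ∂μ) + ∫ ω, |η ω| ^ α ∂μ := by
  have hα0 : (0 : ℝ) ≤ α := by linarith
  -- the function on the product space
  set f : ℝ × ℝ → ℝ := fun p => |p.1 + p.2| ^ α with hf
  have hfc : Continuous f :=
    ((continuous_fst.add continuous_snd).abs).rpow_const (fun x => Or.inr hα0)
  -- equality of joint distributions
  have hηneg : Measurable (fun ω => -η ω) := hη.neg
  have hindep' : IndepFun ξ (fun ω => -η ω) μ :=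
    hindep.comp measurable_id measurable_neg
  have hmap1 : μ.map (fun ω => (ξ ω, η ω)) = (μ.map ξ).prod (μ.map η) :=
    (indepFun_iff_map_prod_eq_prod_map_map hξ.aemeasurable hη.aemeasurable).mp hindep
  have hmap2 : μ.map (fun ω => (ξ ω, -η ω)) = (μ.map ξ).prod (μ.map (fun ω => -η ω)) :=
    (indepFun_iff_map_prod_eq_prod_map_map hξ.aemeasurable hηneg.aemeasurable).mp hindep'
  have hmaps : μ.map (fun ω => (ξ ω, η ω)) = μ.map (fun ω => (ξ ω, -η ω)) := by
    rw [hmap1, hmap2, hsymm]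
  -- E|ξ - η|^α = E|ξ + η|^α
  have heq : ∫ ω, |ξ ω - η ω| ^ α ∂μ = ∫ ω, |ξ ω + η ω| ^ α ∂μ := by
    have e1 : ∫ ω, |ξ ω + η ω| ^ α ∂μ = ∫ p, f p ∂(μ.map (fun ω => (ξ ω, η ω))) := by
      rw [integral_map (hξ.prodMk hη).aemeasurable hfc.aestronglyMeasurable]
    have e2 : ∫ ω, |ξ ω - η ω| ^ α ∂μ = ∫ p, f p ∂(μ.map (fun ω => (ξ ω, -η ω))) := by
      rw [integral_map (hξ.prodMk hηneg).aemeasurable hfc.aestronglyMeasurable]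
      simp [hf, sub_eq_add_neg]
    rw [e1, e2, hmaps]
  -- integrability
  have hdom : Integrable (fun ω => 2 ^ α * (|ξ ω| ^ α + |η ω| ^ α)) μ :=
    (hintξ.add hintη).const_mul _
  have hint1 : Integrable (fun ω => |ξ ω + η ω| ^ α) μ := by
    refine hdom.mono' ?_ ?_
    · exact ((Real.continuous_rpow_const hα0).measurable.comp ((hξ.add hη).abs)).aestronglyMeasurable
    · filter_upwards with ω
      rw [Real.norm_eq_abs, abs_of_nonneg (Real.rpow_nonneg (abs_nonneg _) _)]
      exact bound_pointwise α hα0 (ξ ω) (η ω)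
  have hint2 : Integrable (fun ω => |ξ ω - η ω| ^ α) μ := by
    refine hdom.mono' ?_ ?_
    · exact ((Real.continuous_rpow_const hα0).measurable.comp ((hξ.sub hη).abs)).aestronglyMeasurable
    · filter_upwards with ω
      rw [Real.norm_eq_abs, abs_of_nonneg (Real.rpow_nonneg (abs_nonneg _) _)]
      have := bound_pointwise α hα0 (ξ ω) (-η ω)
      simpa [sub_eq_add_neg] using this
  -- main estimate
  have hmono : ∫ ω, (|ξ ω + η ω| ^ α + |ξ ω - η ω| ^ α) ∂μ ≤
      ∫ ω, 2 * (|ξ ω| ^ α + |η ω| ^ α) ∂μ := by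
    refine integral_mono (hint1.add hint2) ((hintξ.add hintη).const_mul 2) ?_
    intro ω
    exact key_pointwise α h1 h2 (ξ ω) (η ω)
  rw [integral_add hint1 hint2, heq, integral_const_mul, integral_add hintξ hintη] at hmono
  linarith
end

section
/- Let ξ₁, …, ξₙ be mutually independent real-valued random variables with E[ξᵢ] = 0 and E[|ξᵢ|^α] < ∞ for some 1 ≤ α ≤ 2. Then E[|ξ₁ + ⋯ + ξₙ|^α] ≤ 2^α (E[|ξ₁|^α] + ⋯ + E[|ξₙ|^α]). -/
/-!
For `1 < α` the function `|t| ^ α` has derivative `α * g t`, where `g t = sign t * |t| ^ (α - 1)`,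
and since `α - 1 ≤ 1` this derivative satisfies `g u - g v ≤ 2 * (u - v) ^ (α - 1)` for `v ≤ u`.
Comparing derivatives in `y` turns this into the pointwise bound
`|x + y| ^ α ≤ |x| ^ α + α * g x * y + 2 * |y| ^ α` (for `α = 1` it is the triangle inequality).
If `X` and `Y` are independent and `E Y = 0`, the middle term has expectation `E (g X) * E Y = 0`,
so `E |X + Y| ^ α ≤ E |X| ^ α + 2 * E |Y| ^ α`. Adding the `ξᵢ` one at a time gives the bound
with the constant `2 ≤ 2 ^ α`.
-/

open MeasureTheory ProbabilityTheory

noncomputable def signedRpow (β x : ℝ) : ℝ := if 0 ≤ x then x ^ β else -(-x) ^ β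

lemma signedRpow_of_nonneg {β x : ℝ} (hx : 0 ≤ x) : signedRpow β x = x ^ β := if_pos hx

lemma signedRpow_of_neg {β x : ℝ} (hx : x < 0) : signedRpow β x = -(-x) ^ β := if_neg hx.not_ge

lemma abs_signedRpow (β x : ℝ) : |signedRpow β x| = |x| ^ β := by
  rcases le_or_gt 0 x with hx | hx
  · rw [signedRpow_of_nonneg hx, abs_of_nonneg hx, abs_of_nonneg (by positivity)]
  · rw [signedRpow_of_neg hx, abs_neg, abs_of_neg hx,
      abs_of_nonneg (Real.rpow_nonneg (by linarith) _)]

lemma measurable_signedRpow (β : ℝ) : Measurable (signedRpow β) :=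
  Measurable.ite measurableSet_Ici (measurable_id.pow_const β) ((measurable_neg.pow_const β).neg)

lemma abs_rpow_sub_two_mul_self {p : ℝ} (hp : 1 < p) (x : ℝ) :
    |x| ^ (p - 2) * x = signedRpow (p - 1) x := by
  have hp' : p - 2 + 1 ≠ 0 := by linarith
  rcases le_or_gt 0 x with hx | hx
  · rw [signedRpow_of_nonneg hx, abs_of_nonneg hx, ← Real.rpow_add_one' hx hp']
    ring_nf
  · rw [signedRpow_of_neg hx, abs_of_neg hx, ← neg_neg x, neg_neg, mul_neg,
      ← Real.rpow_add_one' (by linarith) hp']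
    ring_nf

lemma hasDerivAt_abs_rpow_signedRpow {p : ℝ} (hp : 1 < p) (x : ℝ) :
    HasDerivAt (fun x ↦ |x| ^ p) (p * signedRpow (p - 1) x) x := by
  simpa only [mul_assoc, abs_rpow_sub_two_mul_self hp] using hasDerivAt_abs_rpow x hp

lemma signedRpow_sub_le {β u v : ℝ} (hβ₀ : 0 < β) (hβ₁ : β ≤ 1) (h : v ≤ u) :
    signedRpow β u - signedRpow β v ≤ 2 * (u - v) ^ β := by
  have hsub : ∀ {a b : ℝ}, 0 ≤ a → 0 ≤ b → (a + b) ^ β - b ^ β ≤ a ^ β := fun ha hb ↦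
    sub_le_iff_le_add.2 (Real.rpow_add_le_add_rpow ha hb hβ₀.le hβ₁)
  have huv : 0 ≤ (u - v) ^ β := by positivity
  rcases le_or_gt 0 v with hv | hv
  · rw [signedRpow_of_nonneg hv, signedRpow_of_nonneg (hv.trans h)]
    have := hsub (sub_nonneg.2 h) hv
    rw [sub_add_cancel] at this
    linarith
  rcases le_or_gt 0 u with hu | hu
  · rw [signedRpow_of_neg hv, signedRpow_of_nonneg hu]
    have h₁ : u ^ β ≤ (u - v) ^ β := by gcongr; linarith
    have h₂ : (-v) ^ β ≤ (u - v) ^ β := by gcongr <;> linarith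
    linarith
  · rw [signedRpow_of_neg hv, signedRpow_of_neg hu]
    have := hsub (sub_nonneg.2 h) (neg_nonneg.2 hu.le)
    rw [show u - v + -u = -v by ring] at this
    linarith

lemma apply_zero_le_of_hasDerivAt_of_sign {f f' : ℝ → ℝ} (hf : ∀ x, HasDerivAt f (f' x) x)
    (hpos : ∀ x, 0 < x → 0 ≤ f' x) (hneg : ∀ x, x < 0 → f' x ≤ 0) (s : ℝ) : f 0 ≤ f s := by
  have hcont : Continuous f := continuous_iff_continuousAt.2 fun x ↦ (hf x).continuousAt
  rcases le_total 0 s with hs | hs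
  · refine monotoneOn_of_hasDerivWithinAt_nonneg (convex_Ici 0) hcont.continuousOn
      (fun x _ ↦ (hf x).hasDerivWithinAt) (fun x hx ↦ hpos x ?_) Set.self_mem_Ici hs hs
    simpa using hx
  · refine antitoneOn_of_hasDerivWithinAt_nonpos (convex_Iic 0) hcont.continuousOn
      (fun x _ ↦ (hf x).hasDerivWithinAt) (fun x hx ↦ hneg x ?_) hs Set.self_mem_Iic hs
    simpa using hx

lemma abs_add_rpow_le {α : ℝ} (h1 : 1 ≤ α) (h2 : α ≤ 2) (x y : ℝ) :
    |x + y| ^ α ≤ |x| ^ α + α * signedRpow (α - 1) x * y + 2 * |y| ^ α := by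
  rcases h1.eq_or_lt with rfl | hα
  · have h := neg_abs_le (signedRpow (1 - 1) x * y)
    rw [abs_mul, abs_signedRpow, sub_self, Real.rpow_zero, one_mul] at h
    simp only [Real.rpow_one, one_mul, sub_self]
    linarith [abs_add_le x y]
  have hβ₀ : 0 < α - 1 := by linarith
  have hβ₁ : α - 1 ≤ 1 := by linarith
  -- The gap between the two sides vanishes at `y = 0` and its derivative has the sign of `y`.
  have hd (s : ℝ) : HasDerivAt
      (fun s ↦ |x| ^ α + α * signedRpow (α - 1) x * s + 2 * |s| ^ α - |x + s| ^ α)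
      (α * signedRpow (α - 1) x + 2 * (α * signedRpow (α - 1) s) - α * signedRpow (α - 1) (x + s))
      s := by
    refine ((((hasDerivAt_id' s).const_mul _).const_add _).add
      ((hasDerivAt_abs_rpow_signedRpow hα s).const_mul 2) |>.sub
      ((hasDerivAt_abs_rpow_signedRpow hα (x + s)).comp_const_add x s)).congr_deriv ?_
    rw [mul_one]
  have key := apply_zero_le_of_hasDerivAt_of_sign hd (fun s hs ↦ ?_) (fun s hs ↦ ?_) y
  · simp only [mul_zero, add_zero, abs_zero, Real.zero_rpow (by linarith : α ≠ 0), sub_self] at key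
    linarith
  · have := signedRpow_sub_le hβ₀ hβ₁ (le_add_of_nonneg_right hs.le) (v := x)
    rw [add_sub_cancel_left, ← signedRpow_of_nonneg hs.le] at this
    nlinarith
  · have := signedRpow_sub_le hβ₀ hβ₁ (add_le_of_nonpos_right hs.le) (u := x)
    rw [sub_add_cancel_left, ← neg_neg ((-s) ^ (α - 1)), ← signedRpow_of_neg hs] at this
    nlinarith

section

variable {Ω : Type*} [MeasurableSpace Ω] {μ : Measure Ω} {α : ℝ}

lemma integral_abs_add_rpow_le [IsFiniteMeasure μ] (h1 : 1 ≤ α) (h2 : α ≤ 2) {X Y : Ω → ℝ}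
    (hX : MemLp X (ENNReal.ofReal α) μ) (hY : MemLp Y (ENNReal.ofReal α) μ)
    (hXY : IndepFun X Y μ) (hY₀ : ∫ ω, Y ω ∂μ = 0) :
    ∫ ω, |X ω + Y ω| ^ α ∂μ ≤ ∫ ω, |X ω| ^ α ∂μ + 2 * ∫ ω, |Y ω| ^ α ∂μ := by
  have hα : (ENNReal.ofReal α).toReal = α := ENNReal.toReal_ofReal (by linarith)
  have hXα : Integrable (fun ω ↦ |X ω| ^ α) μ := by simpa [hα] using hX.integrable_norm_rpow'
  have hYα : Integrable (fun ω ↦ |Y ω| ^ α) μ := by simpa [hα] using hY.integrable_norm_rpow'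
  have hgX : Integrable (fun ω ↦ signedRpow (α - 1) (X ω)) μ := by
    refine (integrable_norm_rpow_of_le hX.1 (by linarith) (by linarith) (by linarith : α - 1 ≤ α)
      (by simpa using hXα)).mono' (measurable_signedRpow _ |>.comp_aemeasurable
        hX.1.aemeasurable).aestronglyMeasurable (.of_forall fun ω ↦ ?_)
    simp [abs_signedRpow]
  have hindep : IndepFun (fun ω ↦ signedRpow (α - 1) (X ω)) Y μ :=
    hXY.comp (measurable_signedRpow _) measurable_id
  have hYint : Integrable Y μ := hY.integrable (by simpa using h1)
  have hcross : ∫ ω, signedRpow (α - 1) (X ω) * Y ω ∂μ = 0 := by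
    rw [hindep.integral_fun_mul_eq_mul_integral hgX.1 hYint.1, hY₀, mul_zero]
  have hprod : Integrable (fun ω ↦ signedRpow (α - 1) (X ω) * Y ω) μ :=
    hindep.integrable_mul hgX hYint
  calc ∫ ω, |X ω + Y ω| ^ α ∂μ
      ≤ ∫ ω, |X ω| ^ α + α * (signedRpow (α - 1) (X ω) * Y ω) + 2 * |Y ω| ^ α ∂μ := by
        refine integral_mono_of_nonneg (.of_forall fun ω ↦ by positivity)
          ((hXα.add (hprod.const_mul α)).add (hYα.const_mul 2)) (.of_forall fun ω ↦ ?_)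
        simpa only [mul_assoc] using abs_add_rpow_le h1 h2 (X ω) (Y ω)
    _ = ∫ ω, |X ω| ^ α ∂μ + 2 * ∫ ω, |Y ω| ^ α ∂μ := by
        rw [integral_add (hXα.fun_add (hprod.const_mul α)) (hYα.const_mul 2),
          integral_add hXα (hprod.const_mul α), integral_const_mul, integral_const_mul, hcross,
          mul_zero, add_zero]

lemma integral_abs_sum_rpow_le {ι : Type*} [IsFiniteMeasure μ] (h1 : 1 ≤ α) (h2 : α ≤ 2)
    {ξ : ι → Ω → ℝ} (hmeas : ∀ i, Measurable (ξ i)) (hindep : iIndepFun ξ μ)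
    (hmean : ∀ i, ∫ ω, ξ i ω ∂μ = 0) (hmem : ∀ i, MemLp (ξ i) (ENNReal.ofReal α) μ)
    (s : Finset ι) :
    ∫ ω, |∑ i ∈ s, ξ i ω| ^ α ∂μ ≤ 2 * ∑ i ∈ s, ∫ ω, |ξ i ω| ^ α ∂μ := by
  classical
  induction s using Finset.induction_on with
  | empty => simp [Real.zero_rpow (by linarith : α ≠ 0)]
  | insert i s hi ih =>
    have hindep' : IndepFun (fun ω ↦ ∑ j ∈ s, ξ j ω) (ξ i) μ := by
      simpa [Finset.sum_fn] using hindep.indepFun_finsetSum_of_notMem hmeas hi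
    simp only [Finset.sum_insert hi, add_comm (ξ i _)]
    have := integral_abs_add_rpow_le h1 h2 (memLp_finsetSum s fun j _ ↦ hmem j) (hmem i)
      hindep' (hmean i)
    linarith

end

theorem stmt_3 {Ω : Type*} [MeasurableSpace Ω] (μ : Measure Ω) [IsProbabilityMeasure μ]
    (n : ℕ) (ξ : Fin n → Ω → ℝ) (hmeas : ∀ i, Measurable (ξ i))
    (hindep : iIndepFun ξ μ)
    (hmean : ∀ i, ∫ ω, ξ i ω ∂μ = 0)
    (α : ℝ) (h1 : 1 ≤ α) (h2 : α ≤ 2)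
    (hint : ∀ i, Integrable (fun ω => |ξ i ω| ^ α) μ) :
    ∫ ω, |∑ i, ξ i ω| ^ α ∂μ ≤ 2 ^ α * ∑ i, ∫ ω, |ξ i ω| ^ α ∂μ := by
  have hmem (i : Fin n) : MemLp (ξ i) (ENNReal.ofReal α) μ := by
    rw [← integrable_norm_rpow_iff (hmeas i).aestronglyMeasurable (by simp; linarith) (by simp),
      ENNReal.toReal_ofReal (by linarith)]
    simpa using hint i
  have h2α : (2 : ℝ) ≤ 2 ^ α := by
    simpa using Real.rpow_le_rpow_of_exponent_le one_le_two h1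
  calc ∫ ω, |∑ i, ξ i ω| ^ α ∂μ ≤ 2 * ∑ i, ∫ ω, |ξ i ω| ^ α ∂μ :=
        integral_abs_sum_rpow_le h1 h2 hmeas hindep hmean hmem Finset.univ
    _ ≤ 2 ^ α * ∑ i, ∫ ω, |ξ i ω| ^ α ∂μ := by gcongr
end

section
/- Let M ≥ 1 be an integer with M = mφN, and define F(k, d) := Σ_{0 ≤ i₁ < ⋯ < i_d ≤ M} exp(−(i₁ + ⋯ + i_{d−1} + k·i_d)/(mN)) for integers k ≥ 1 and d ≥ 2. Then F(k,d) = (e^{−k/(mN)}/(1 − e^{−k/(mN)})) (F(k+1, d−1) − e^{−kφ} F(1, d−1)). -/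
/-- F(k,d) = Σ_{0 ≤ i₁ < ⋯ < i_d ≤ M} exp(-(i₁+⋯+i_{d-1}+k·i_d)/(mN)).
Since i₁+⋯+i_{d-1}+k·i_d = (Σ_{j} i_j) + (k-1)·max, we encode the sum over
strictly increasing tuples as a sum over d-element subsets of {0, …, M}. -/
noncomputable def F (m N M k d : ℕ) : ℝ :=
  ∑ s ∈ (Finset.range (M + 1)).powersetCard d,
    Real.exp (-((∑ i ∈ s, (i : ℝ)) + ((k : ℝ) - 1) * (s.sup id : ℕ)) / ((m : ℝ) * N))

open Finset

private lemma sup_id_mem {s : Finset ℕ} (hs : s.Nonempty) : s.sup id ∈ s := by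
  have := s.max'_mem hs
  rwa [Finset.max'_eq_sup', Finset.sup'_eq_sup] at this

/-- Split a sum over (e+1)-subsets of {0,…,M} into a sum over e-subsets together
with a new maximal element. -/
private lemma split_sum (M e : ℕ) (he : 1 ≤ e) (f : Finset ℕ → ℝ) :
    ∑ s ∈ (range (M + 1)).powersetCard (e + 1), f s
      = ∑ t ∈ (range (M + 1)).powersetCard e, ∑ i ∈ Ioc (t.sup id) M, f (insert i t) := by
  rw [Finset.sum_sigma']
  refine (Finset.sum_nbij' (i := fun p => insert p.2 p.1)
    (j := fun s => ⟨s.erase (s.sup id), s.sup id⟩) ?_ ?_ ?_ ?_ ?_).symm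
  · rintro ⟨t, i⟩ hp
    simp only [Finset.mem_sigma, Finset.mem_powersetCard, Finset.mem_Ioc] at hp ⊢
    obtain ⟨⟨hts, htc⟩, hji, hiM⟩ := hp
    have hit : i ∉ t := fun h => absurd (Finset.le_sup (f := id) h) (by simpa using hji.not_ge)
    refine ⟨Finset.insert_subset (by simp [Nat.lt_succ_iff.mpr hiM]) hts, ?_⟩
    rw [Finset.card_insert_of_notMem hit, htc]
  · intro s hs
    simp only [Finset.mem_powersetCard] at hs
    obtain ⟨hss, hsc⟩ := hs
    have hne : s.Nonempty := Finset.card_pos.mp (by omega)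
    have hmem : s.sup id ∈ s := sup_id_mem hne
    have hpos : 0 < s.sup id := by
      obtain ⟨a, ha, b, hb, hab⟩ := Finset.one_lt_card.mp (by omega : 1 < s.card)
      have ha' : a ≤ s.sup id := Finset.le_sup (f := id) ha
      have hb' : b ≤ s.sup id := Finset.le_sup (f := id) hb
      omega
    have hlt : (s.erase (s.sup id)).sup id < s.sup id := by
      rw [Finset.sup_lt_iff hpos]
      intro b hb
      have := Finset.mem_erase.mp hb
      exact lt_of_le_of_ne (Finset.le_sup (f := id) this.2) this.1
    simp only [Finset.mem_sigma, Finset.mem_powersetCard, Finset.mem_Ioc]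
    refine ⟨⟨(Finset.erase_subset _ _).trans hss, ?_⟩, hlt, ?_⟩
    · rw [Finset.card_erase_of_mem hmem, hsc]; rfl
    · have := hss hmem
      simpa [Nat.lt_succ_iff] using this
  · rintro ⟨t, i⟩ hp
    simp only [Finset.mem_sigma, Finset.mem_powersetCard, Finset.mem_Ioc] at hp
    obtain ⟨⟨hts, htc⟩, hji, hiM⟩ := hp
    have hit : i ∉ t := fun h => absurd (Finset.le_sup (f := id) h) (by simpa using hji.not_ge)
    have hsup : (insert i t).sup id = i := by
      rw [Finset.sup_insert]
      simpa using hji.le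
    simp only [hsup, Finset.erase_insert hit]
  · intro s hs
    simp only [Finset.mem_powersetCard] at hs
    have hne : s.Nonempty := Finset.card_pos.mp (by omega)
    simp [Finset.insert_erase (sup_id_mem hne)]
  · rintro ⟨t, i⟩ _
    rfl

/-- Recurrence: with M = mφN an integer,
F(k,d) = (e^{-k/(mN)}/(1 - e^{-k/(mN)})) (F(k+1, d-1) - e^{-kφ} F(1, d-1)). -/
theorem stmt_12 (m N M k d : ℕ) (hm : 1 ≤ m) (hN : 1 ≤ N) (hM : 1 ≤ M)
    (hk : 1 ≤ k) (hd : 2 ≤ d) (φ : ℝ) (hφ : 0 < φ) (hMφ : (M : ℝ) = (m : ℝ) * φ * N) :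
    F m N M k d =
      (Real.exp (-(k : ℝ) / ((m : ℝ) * N)) / (1 - Real.exp (-(k : ℝ) / ((m : ℝ) * N)))) *
        (F m N M (k + 1) (d - 1) - Real.exp (-(k : ℝ) * φ) * F m N M 1 (d - 1)) := by
  have hmN : (0 : ℝ) < (m : ℝ) * N := by positivity
  have hmN' : ((m : ℝ) * N) ≠ 0 := ne_of_gt hmN
  set r : ℝ := Real.exp (-(k : ℝ) / ((m : ℝ) * N)) with hr
  have hr1 : r < 1 := by
    rw [hr]
    have hkpos : (0 : ℝ) < (k : ℝ) := by exact_mod_cast hk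
    simpa using Real.exp_lt_exp.mpr (div_neg_of_neg_of_pos (by linarith) hmN)
  have hrne : r ≠ 1 := ne_of_lt hr1
  have hrsub : (1 : ℝ) - r ≠ 0 := by intro h; apply hrne; linarith
  have hrpow : ∀ i : ℕ, r ^ i = Real.exp ((i : ℝ) * (-(k : ℝ) / ((m : ℝ) * N))) := by
    intro i; rw [Real.exp_nat_mul]
  have hrM : Real.exp (-(k : ℝ) * φ) = r ^ M := by
    rw [hrpow M, hMφ]
    congr 1
    field_simp
  obtain ⟨e, rfl⟩ : ∃ e, d = e + 1 := ⟨d - 1, by omega⟩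
  have he : 1 ≤ e := by omega
  simp only [Nat.add_sub_cancel]
  rw [F, split_sum M e he, F, F]
  rw [show ∀ A B : ℝ, r / (1 - r) * (A - Real.exp (-(k : ℝ) * φ) * B)
        = r / (1 - r) * A - r / (1 - r) * Real.exp (-(k : ℝ) * φ) * B from by intros; ring,
    Finset.mul_sum, Finset.mul_sum, ← Finset.sum_sub_distrib]
  apply Finset.sum_congr rfl
  intro t ht
  simp only [Finset.mem_powersetCard] at ht
  obtain ⟨hts, htc⟩ := ht
  have hne : t.Nonempty := Finset.card_pos.mp (by omega)
  have hjM : t.sup id ≤ M := by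
    have := hts (sup_id_mem hne)
    simpa [Nat.lt_succ_iff] using this
  set j := t.sup id with hj
  set S : ℝ := ∑ i ∈ t, (i : ℝ) with hS
  -- rewrite inner sum terms
  have hterm : ∀ i ∈ Ioc j M,
      Real.exp (-((∑ x ∈ insert i t, (x : ℝ)) + ((k : ℝ) - 1) * ((insert i t).sup id : ℕ))
        / ((m : ℝ) * N)) = Real.exp (-S / ((m : ℝ) * N)) * r ^ i := by
    intro i hi
    rw [Finset.mem_Ioc] at hi
    have hit : i ∉ t := fun h => absurd (Finset.le_sup (f := id) h) (by simpa using hi.1.not_ge)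
    have hsup : (insert i t).sup id = i := by
      rw [Finset.sup_insert, id_eq, sup_eq_left]; exact hi.1.le
    rw [Finset.sum_insert hit, hsup, hrpow i, ← Real.exp_add]
    congr 1
    field_simp
    ring
  rw [Finset.sum_congr rfl hterm, ← Finset.mul_sum]
  have hgeom : ∑ i ∈ Ioc j M, r ^ i = (r ^ (M + 1) - r ^ (j + 1)) / (r - 1) := by
    rw [← Finset.Ico_add_one_add_one_eq_Ioc, geom_sum_Ico hrne (by omega)]
  rw [hgeom]
  -- rewrite the two F-terms
  have hA : Real.exp (-((S : ℝ) + (((k : ℕ) + 1 : ℕ) - 1 : ℝ) * (j : ℕ)) / ((m : ℝ) * N))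
      = Real.exp (-S / ((m : ℝ) * N)) * r ^ j := by
    rw [hrpow j, ← Real.exp_add]
    congr 1
    push_cast
    field_simp
    ring
  have hB : Real.exp (-((S : ℝ) + (((1 : ℕ) : ℝ) - 1) * (j : ℕ)) / ((m : ℝ) * N))
      = Real.exp (-S / ((m : ℝ) * N)) := by
    congr 1
    push_cast
    ring
  push_cast at hA hB ⊢
  rw [hA, hB, hrM]
  have hrs : r - 1 ≠ 0 := sub_ne_zero.mpr hrne
  field_simp
  ring
end

section
/- With F(k,d) as above (summing exp(−(i₁+⋯+i_{d−1}+k·i_d)/(mN)) over 0 ≤ i₁ < ⋯ < i_d ≤ M), one has the upper bound F(k, d) ≤ exp(−(2k+d−2)(d−1)/(2mN)) / ∏_{j=0}^{d−1} (1 − e^{−(k+j)/(mN)}). -/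
open Finset Real

theorem Finset.sum_powersetCard_succ_insert {α β : Type*} [DecidableEq α] [AddCommMonoid β]
    {a : α} {s : Finset α} (ha : a ∉ s) (n : ℕ) (f : Finset α → β) :
    ∑ t ∈ (insert a s).powersetCard (n + 1), f t =
      ∑ t ∈ s.powersetCard (n + 1), f t + ∑ t ∈ s.powersetCard n, f (insert a t) := by
  rw [powersetCard_succ_insert ha, sum_union, sum_image]
  · exact insert_erase_invOn.2.injOn.mono fun t ht ↦ notMem_mono (mem_powersetCard.1 ht).1 ha
  · aesop (add simp [disjoint_left, insert_subset_iff, mem_powersetCard])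

noncomputable def subsetWeight (τ κ : ℝ) (s : Finset ℕ) : ℝ :=
  exp (-((∑ i ∈ s, (i : ℝ)) + (κ - 1) * (s.sup id : ℕ)) / τ)

noncomputable def subsetWeightSum (τ κ : ℝ) (M d : ℕ) : ℝ :=
  ∑ s ∈ (range (M + 1)).powersetCard d, subsetWeight τ κ s

noncomputable def subsetWeightBound (τ κ : ℝ) (d : ℕ) : ℝ :=
  exp (-((2 * κ + d - 2) * ((d : ℝ) - 1)) / (2 * τ)) /
    ∏ j ∈ range d, (1 - exp (-(κ + j) / τ))

theorem exp_neg_div_lt_one {a τ : ℝ} (ha : 0 < a) (hτ : 0 < τ) : exp (-a / τ) < 1 :=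
  exp_lt_one_iff.2 (div_neg_of_neg_of_pos (neg_neg_of_pos ha) hτ)

section

variable {τ κ : ℝ}

theorem subsetWeight_map_succ {s : Finset ℕ} {d : ℕ} (hs : #s = d + 1) :
    subsetWeight τ κ (s.map (addRightEmbedding 1)) = exp (-(κ + d) / τ) * subsetWeight τ κ s := by
  have hsup : (s.map (addRightEmbedding 1)).sup id = s.sup id + 1 := by
    rw [sup_map, Finset.sup_add (card_pos.1 (by omega))]
    rfl
  rw [subsetWeight, subsetWeight, ← exp_add, hsup, sum_map]
  simp only [addRightEmbedding_apply, Nat.cast_add, Nat.cast_one, sum_add_distrib, sum_const,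
    nsmul_eq_mul, mul_one, hs]
  ring_nf

theorem subsetWeight_insert_zero {s : Finset ℕ} (hs : 0 ∉ s) :
    subsetWeight τ κ (insert 0 s) = subsetWeight τ κ s := by
  rw [subsetWeight, subsetWeight, sum_insert hs, sup_insert]
  simp

theorem sum_powersetCard_map_succ (M d : ℕ) :
    ∑ s ∈ ((range (M + 1)).map (addRightEmbedding 1)).powersetCard (d + 1), subsetWeight τ κ s =
      exp (-(κ + d) / τ) * subsetWeightSum τ κ M (d + 1) := by
  rw [powersetCard_map, sum_map, subsetWeightSum, mul_sum]
  refine sum_congr rfl fun s hs ↦ ?_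
  rw [RelEmbedding.coe_toEmbedding, mapEmbedding_apply,
    subsetWeight_map_succ (mem_powersetCard.1 hs).2]

theorem subsetWeightSum_succ_succ (M e : ℕ) :
    subsetWeightSum τ κ (M + 1) (e + 2) =
      exp (-(κ + e + 1) / τ) * subsetWeightSum τ κ M (e + 2) +
        exp (-(κ + e) / τ) * subsetWeightSum τ κ M (e + 1) := by
  have hrange : range (M + 1 + 1) = insert 0 ((range (M + 1)).map (addRightEmbedding 1)) :=
    range_add_one' _
  have h0 : 0 ∉ (range (M + 1)).map (addRightEmbedding 1) := by simp
  rw [subsetWeightSum, hrange, sum_powersetCard_succ_insert h0, sum_powersetCard_map_succ,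
    sum_congr rfl fun s hs ↦ subsetWeight_insert_zero fun h ↦ h0 ((mem_powersetCard.1 hs).1 h),
    sum_powersetCard_map_succ]
  push_cast
  ring_nf

theorem subsetWeightSum_zero_succ_succ (e : ℕ) : subsetWeightSum τ κ 0 (e + 2) = 0 := by
  rw [subsetWeightSum, powersetCard_eq_empty.2 (by simp), sum_empty]

theorem subsetWeightSum_one (M : ℕ) :
    subsetWeightSum τ κ M 1 = ∑ i ∈ range (M + 1), exp (-κ / τ) ^ i := by
  rw [subsetWeightSum, powersetCard_one, sum_map]
  refine sum_congr rfl fun i _ ↦ ?_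
  rw [← exp_nat_mul]
  simp only [Function.Embedding.coeFn_mk, subsetWeight, sum_singleton, sup_singleton, id]
  ring_nf

theorem subsetWeightBound_one : subsetWeightBound τ κ 1 = 1 / (1 - exp (-κ / τ)) := by
  simp [subsetWeightBound]

theorem subsetWeightBound_pos (hτ : 0 < τ) (hκ : 0 < κ) (d : ℕ) : 0 < subsetWeightBound τ κ d :=
  div_pos (exp_pos _) (prod_pos fun _ _ ↦ sub_pos.2 (exp_neg_div_lt_one (by positivity) hτ))

theorem subsetWeightBound_succ_succ (hτ : 0 < τ) (hκ : 0 < κ) (e : ℕ) :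
    exp (-(κ + e + 1) / τ) * subsetWeightBound τ κ (e + 2) +
        exp (-(κ + e) / τ) * subsetWeightBound τ κ (e + 1) =
      subsetWeightBound τ κ (e + 2) := by
  have hr : 1 - exp (-(κ + e + 1) / τ) ≠ 0 :=
    (sub_pos.2 (exp_neg_div_lt_one (by positivity) hτ)).ne'
  have hP : ∏ j ∈ range (e + 1), (1 - exp (-(κ + j) / τ)) ≠ 0 :=
    prod_ne_zero_iff.2 fun j _ ↦ (sub_pos.2 (exp_neg_div_lt_one (by positivity) hτ)).ne'
  have hexp : exp (-((2 * κ + (e + 2 : ℕ) - 2) * ((e + 2 : ℕ) - 1)) / (2 * τ)) =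
      exp (-(κ + e) / τ) * exp (-((2 * κ + (e + 1 : ℕ) - 2) * ((e + 1 : ℕ) - 1)) / (2 * τ)) := by
    rw [← exp_add]
    congr 1
    push_cast
    field_simp
    ring
  rw [subsetWeightBound, subsetWeightBound, prod_range_succ _ (e + 1), hexp,
    show κ + (e + 1 : ℕ) = κ + e + 1 by push_cast; ring]
  generalize ∏ j ∈ range (e + 1), (1 - exp (-(κ + j) / τ)) = P at hP ⊢
  generalize exp (-(κ + e + 1) / τ) = r at hr ⊢
  field_simp
  ring

theorem subsetWeightSum_le_bound (hτ : 0 < τ) (hκ : 0 < κ) (M : ℕ) {d : ℕ} (hd : 1 ≤ d) :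
    subsetWeightSum τ κ M d ≤ subsetWeightBound τ κ d := by
  obtain ⟨e, rfl⟩ := Nat.exists_eq_add_of_le' hd
  clear hd
  induction e generalizing M with
  | zero =>
    rw [subsetWeightSum_one, subsetWeightBound_one, range_eq_Ico]
    simpa using geom_sum_Ico_le_of_lt_one (m := 0) (n := M + 1) (exp_pos _).le
      (exp_neg_div_lt_one hκ hτ)
  | succ e ihe =>
    induction M with
    | zero => exact subsetWeightSum_zero_succ_succ e ▸ (subsetWeightBound_pos hτ hκ _).le
    | succ M ihM =>
      rw [subsetWeightSum_succ_succ, ← subsetWeightBound_succ_succ hτ hκ]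
      gcongr
      exact ihe M

end

theorem stmt_13_general (m N M k d : ℕ) (hm : 1 ≤ m) (hN : 1 ≤ N)
    (hk : 1 ≤ k) (hd : 1 ≤ d) :
    F m N M k d ≤
      Real.exp (-((2 * (k : ℝ) + d - 2) * ((d : ℝ) - 1)) / (2 * (m : ℝ) * N)) /
        ∏ j ∈ Finset.range d, (1 - Real.exp (-((k : ℝ) + j) / ((m : ℝ) * N))) := by
  have h := subsetWeightSum_le_bound (τ := (m : ℝ) * N) (κ := k) (by positivity) (by positivity)
    M hd
  rwa [subsetWeightBound, ← mul_assoc] at h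

/-- Upper bound: F(k,d) ≤ e^{-(2k+d-2)(d-1)/(2mN)} / ∏_{j=0}^{d-1} (1 - e^{-(k+j)/(mN)}). -/
theorem stmt_13 (m N M k d : ℕ) (hm : 1 ≤ m) (hN : 1 ≤ N) (hM : 1 ≤ M)
    (hk : 1 ≤ k) (hd : 1 ≤ d) :
    F m N M k d ≤
      Real.exp (-((2 * (k : ℝ) + d - 2) * ((d : ℝ) - 1)) / (2 * (m : ℝ) * N)) /
        ∏ j ∈ Finset.range d, (1 - Real.exp (-((k : ℝ) + j) / ((m : ℝ) * N))) :=
  stmt_13_general m N M k d hm hN hk hd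
end
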